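/- Distribution for multiple-oracle Münchhausen provability without induction: if T is a Λ-Münchhausen theory with predicate [α]_T defined via sequences of oracles, then T ⊢ ∀α≺Λ ∀φ,ψ ( [α]_T(φ→ψ) → ([α]_T φ → [α]_T ψ) ). The proof concatenates the two oracle sequences. -/

import Mathlib

/-- An abstract arithmetical theory `T`: a type `S` of sentences, derivability
`Prov` (for `T ⊢ ·`), falsum and implication, a standard formalized
provability predicate `box` (for `□_T`), an internal representation `ltS` of
the ordering `≺` on (notations for) ordinals, and internal existential
quantifiers over formulas (`exF`), ordinal notations (`exO`), numbers
(`exN`), and finite sequences of (ordinal, formula) pairs (`exL`). -/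
structure MFrame : Type 2 where
  S : Type 1
  Prov : S → Prop
  bot : S
  imp : S → S → S
  box : S → S
  ltS : Ordinal.{0} → Ordinal.{0} → S
  exF : (S → S) → S
  exO : (Ordinal.{0} → S) → S
  exN : (ℕ → S) → S
  exL : (List (Ordinal.{0} × S) → S) → S

namespace MFrame

variable (F : MFrame)

def neg (a : F.S) : F.S := F.imp a F.bot
def top : F.S := F.neg F.bot
def and (a b : F.S) : F.S := F.neg (F.imp a (F.neg b))
def or (a b : F.S) : F.S := F.imp (F.neg a) b
def iff (a b : F.S) : F.S := F.and (F.imp a b) (F.imp b a)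

/-- `⟨ξ⟩_T a := ¬[ξ]_T ¬a` for a candidate Münchhausen predicate `M`. -/
def mdia (M : Ordinal.{0} → F.S → F.S) (ξ : Ordinal.{0}) (a : F.S) : F.S :=
  F.neg (M ξ (F.neg a))

/-- Basic conditions on the theory `T`: classical propositional logic via a
complete Hilbert basis with modus ponens, the Hilbert–Bernays derivability
conditions for `□_T`, introduction/elimination rules for the internal
existential quantifiers, and correctness of the internal ordering `≺`
(true facts `ξ ≺ ζ` are provable, false ones refutable, and `T` proves `≺`
transitive). -/
structure Basic (F : MFrame) : Prop where
  mp : ∀ {a b : F.S}, F.Prov (F.imp a b) → F.Prov a → F.Prov b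
  ax1 : ∀ a b : F.S, F.Prov (F.imp a (F.imp b a))
  ax2 : ∀ a b c : F.S,
    F.Prov (F.imp (F.imp a (F.imp b c)) (F.imp (F.imp a b) (F.imp a c)))
  ax3 : ∀ a b : F.S,
    F.Prov (F.imp (F.imp (F.neg a) (F.neg b)) (F.imp b a))
  nec : ∀ {a : F.S}, F.Prov a → F.Prov (F.box a)
  dist : ∀ a b : F.S,
    F.Prov (F.imp (F.box (F.imp a b)) (F.imp (F.box a) (F.box b)))
  d3 : ∀ a : F.S, F.Prov (F.imp (F.box a) (F.box (F.box a)))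
  ltS_trans : ∀ ξ ζ η : Ordinal,
    F.Prov (F.imp (F.and (F.ltS ξ ζ) (F.ltS ζ η)) (F.ltS ξ η))
  ltS_intro : ∀ {ξ ζ : Ordinal}, ξ < ζ → F.Prov (F.ltS ξ ζ)
  ltS_not : ∀ {ξ ζ : Ordinal}, ¬ ξ < ζ → F.Prov (F.neg (F.ltS ξ ζ))
  exF_intro : ∀ (G : F.S → F.S) (a : F.S), F.Prov (F.imp (G a) (F.exF G))
  exF_elim : ∀ (G : F.S → F.S) (c : F.S),
    (∀ a, F.Prov (F.imp (G a) c)) → F.Prov (F.imp (F.exF G) c)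
  exO_intro : ∀ (G : Ordinal → F.S) (ξ : Ordinal), F.Prov (F.imp (G ξ) (F.exO G))
  exO_elim : ∀ (G : Ordinal → F.S) (c : F.S),
    (∀ ξ, F.Prov (F.imp (G ξ) c)) → F.Prov (F.imp (F.exO G) c)
  exN_intro : ∀ (G : ℕ → F.S) (n : ℕ), F.Prov (F.imp (G n) (F.exN G))
  exN_elim : ∀ (G : ℕ → F.S) (c : F.S),
    (∀ n, F.Prov (F.imp (G n) c)) → F.Prov (F.imp (F.exN G) c)
  exL_intro : ∀ (G : List (Ordinal × F.S) → F.S) (ρ : List (Ordinal × F.S)),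
    F.Prov (F.imp (G ρ) (F.exL G))
  exL_elim : ∀ (G : List (Ordinal × F.S) → F.S) (c : F.S),
    (∀ ρ, F.Prov (F.imp (G ρ) c)) → F.Prov (F.imp (F.exL G) c)

/-- `T` is a single-oracle (one-)Münchhausen theory for `Λ`, with candidate
predicate `M ζ φ` (for `[ζ]_T φ`): `T` proves the defining recursion
`[ζ]φ ↔ □φ ∨ ∃ψ ∃ξ≺ζ (⟨ξ⟩ψ ∧ □(⟨ξ⟩ψ → φ))` for `ζ ≺ Λ`, proves
`ξ ≺ ζ → [ζ](ξ ≺ ζ)`, and proves that `0` is the `≺`-minimal element. -/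
structure OneMunch (F : MFrame) (Λ : Ordinal.{0}) (M : Ordinal.{0} → F.S → F.S) : Prop where
  recEq : ∀ ζ < Λ, ∀ φ : F.S,
    F.Prov (F.iff (M ζ φ)
      (F.or (F.box φ)
        (F.exF fun ψ => F.exO fun ξ =>
          F.and (F.ltS ξ ζ)
            (F.and (F.mdia M ξ ψ) (F.box (F.imp (F.mdia M ξ ψ) φ))))))
  ltS_box : ∀ {ξ ζ : Ordinal}, ξ < ζ →
    F.Prov (F.imp (F.ltS ξ ζ) (M ζ (F.ltS ξ ζ)))
  min_zero : ∀ ξ : Ordinal, F.Prov (F.neg (F.ltS ξ 0))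

/-- The internal conjunction `⟨τ⟩_T σ` asserting of a finite sequence `ρ` of
pairs (ordinal `τ_i`, formula `σ(i)`) that every `⟨τ_i⟩_T σ(i)` holds. -/
def listDia (M : Ordinal.{0} → F.S → F.S) (ρ : List (Ordinal.{0} × F.S)) : F.S :=
  ρ.foldr (fun p acc => F.and (F.mdia M p.1 p.2) acc) F.top

/-- The internal conjunction asserting `τ ≺ α`, i.e. every ordinal entry of
the sequence `ρ` is `≺ α`. -/
def listLt (ρ : List (Ordinal.{0} × F.S)) (α : Ordinal.{0}) : F.S :=
  ρ.foldr (fun p acc => F.and (F.ltS p.1 α) acc) F.top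

/-- `T` is a (multiple-oracle) Münchhausen theory for `Λ` with candidate
predicate `M α φ`: `T` proves the recursion
`[α]φ ↔ □φ ∨ ∃σ ∃τ≺α (⟨τ⟩σ ∧ □(⟨τ⟩σ → φ))`, where the internal existential
ranges over finite sequences `ρ` of pairs (which encodes the pair `σ, τ` of
equal-length sequences of formulas and of ordinals), together with
`ξ ≺ ζ → [ζ](ξ ≺ ζ)`. -/
structure MultiMunch (F : MFrame) (Λ : Ordinal.{0}) (M : Ordinal.{0} → F.S → F.S) : Prop where
  recEq : ∀ α < Λ, ∀ φ : F.S,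
    F.Prov (F.iff (M α φ)
      (F.or (F.box φ)
        (F.exL fun ρ =>
          F.and (F.listLt ρ α)
            (F.and (F.listDia M ρ) (F.box (F.imp (F.listDia M ρ) φ))))))
  ltS_box : ∀ {ξ ζ : Ordinal}, ξ < ζ →
    F.Prov (F.imp (F.ltS ξ ζ) (M ζ (F.ltS ξ ζ)))
  min_zero : ∀ ξ : Ordinal, F.Prov (F.neg (F.ltS ξ 0))

/-- Truth in the standard model: a predicate `Tr` making `T` sound, commuting
with the logical operations, with `Tr (□φ) ↔ T ⊢ φ` and with the internal
quantifiers and ordering evaluated standardly. -/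
structure Truth (F : MFrame) (Tr : F.S → Prop) : Prop where
  sound : ∀ a : F.S, F.Prov a → Tr a
  bot : ¬ Tr F.bot
  imp : ∀ a b : F.S, Tr (F.imp a b) ↔ (Tr a → Tr b)
  box : ∀ a : F.S, Tr (F.box a) ↔ F.Prov a
  ltS : ∀ ξ ζ : Ordinal, Tr (F.ltS ξ ζ) ↔ ξ < ζ
  exF : ∀ G : F.S → F.S, Tr (F.exF G) ↔ ∃ a, Tr (G a)
  exO : ∀ G : Ordinal → F.S, Tr (F.exO G) ↔ ∃ ξ, Tr (G ξ)
  exN : ∀ G : ℕ → F.S, Tr (F.exN G) ↔ ∃ n, Tr (G n)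
  exL : ∀ G : List (Ordinal × F.S) → F.S, Tr (F.exL G) ↔ ∃ ρ, Tr (G ρ)

end MFrame

/-!
The box disjunct of the recursion is the oracle disjunct for the empty sequence, so provably
`[α]χ ↔ ∃σ ∃τ≺α (⟨τ⟩σ ∧ □(⟨τ⟩σ → χ))`. Given witnesses `σ₁, τ₁` for `φ → ψ` and `σ₂, τ₂` for `φ`,
the concatenations witness `ψ`: `⟨τ₁τ₂⟩σ₁σ₂` is the conjunction of `⟨τ₁⟩σ₁` and `⟨τ₂⟩σ₂`, and
`□(⟨τ₁⟩σ₁ → (φ → ψ))`, `□(⟨τ₂⟩σ₂ → φ)` give `□(⟨τ₁τ₂⟩σ₁σ₂ → ψ)` by the derivability conditions.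
-/

namespace MFrame

variable {F : MFrame}

inductive Der (F : MFrame) : List F.S → F.S → Prop
  | hyp {Γ : List F.S} {a : F.S} : a ∈ Γ → F.Der Γ a
  | prov {Γ : List F.S} {a : F.S} : F.Prov a → F.Der Γ a
  | mp {Γ : List F.S} {a b : F.S} : F.Der Γ (F.imp a b) → F.Der Γ a → F.Der Γ b

namespace Der

variable {Γ Δ : List F.S} {a b : F.S}

theorem mono (h : F.Der Γ a) (hΓΔ : Γ ⊆ Δ) : F.Der Δ a := by
  induction h with
  | hyp ha => exact .hyp (hΓΔ ha)
  | prov ha => exact .prov ha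
  | mp _ _ ihab iha => exact .mp ihab iha

theorem weaken (h : F.Der Γ a) : F.Der (b :: Γ) a :=
  h.mono (List.subset_cons_self _ _)

theorem weaken_tail {c : F.S} (h : F.Der (c :: Γ) a) : F.Der (c :: b :: Γ) a :=
  h.mono (List.cons_subset_cons _ (List.subset_cons_self _ _))

end Der

namespace Basic

variable (hF : F.Basic) {Γ : List F.S} {a b c : F.S}
include hF

theorem imp_self (a : F.S) : F.Prov (F.imp a a) :=
  hF.mp (hF.mp (hF.ax2 a (F.imp a a) a) (hF.ax1 a (F.imp a a))) (hF.ax1 a a)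

theorem ded (h : F.Der (a :: Γ) b) : F.Der Γ (F.imp a b) := by
  generalize hΔ : a :: Γ = Δ at h
  induction h with
  | hyp hmem =>
    subst hΔ
    rcases List.mem_cons.1 hmem with rfl | hmem
    · exact .prov (hF.imp_self _)
    · exact .mp (.prov (hF.ax1 _ a)) (.hyp hmem)
  | prov hp => exact .mp (.prov (hF.ax1 _ a)) (.prov hp)
  | mp _ _ ihcb ihc => exact .mp (.mp (.prov (hF.ax2 _ _ _)) ihcb) ihc

theorem prov_of_der (h : F.Der [] a) : F.Prov a := by
  induction h with
  | hyp h => exact absurd h List.not_mem_nil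
  | prov h => exact h
  | mp _ _ ihab iha => exact hF.mp ihab iha

theorem der_top : F.Der Γ F.top := .prov (hF.imp_self F.bot)

theorem der_of_der_bot (h : F.Der Γ F.bot) : F.Der Γ a :=
  .mp (.mp (.prov (hF.ax3 a F.bot)) (.mp (.prov (hF.ax1 _ _)) hF.der_top)) h

theorem der_byContra (h : F.Der (F.neg a :: Γ) F.bot) : F.Der Γ a :=
  .mp (.mp (.prov (hF.ax3 a F.top)) (hF.ded (hF.der_of_der_bot h))) hF.der_top

theorem der_and_intro (ha : F.Der Γ a) (hb : F.Der Γ b) : F.Der Γ (F.and a b) :=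
  hF.ded (.mp (.mp (.hyp (.head _)) ha.weaken) hb.weaken)

theorem der_and_left (h : F.Der Γ (F.and a b)) : F.Der Γ a :=
  hF.der_byContra <| .mp h.weaken <|
    hF.ded <| hF.der_of_der_bot <| .mp (.hyp (.tail _ (.head _))) (.hyp (.head _))

theorem der_and_right (h : F.Der Γ (F.and a b)) : F.Der Γ b :=
  hF.der_byContra <| .mp h.weaken <| hF.ded <| .hyp (.tail _ (.head _))

theorem der_and_iff : F.Der Γ (F.and a b) ↔ F.Der Γ a ∧ F.Der Γ b :=
  ⟨fun h => ⟨hF.der_and_left h, hF.der_and_right h⟩, fun h => hF.der_and_intro h.1 h.2⟩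

theorem der_or_inr (h : F.Der Γ b) : F.Der Γ (F.or a b) :=
  .mp (.prov (hF.ax1 b (F.neg a))) h

theorem der_or_elim (h : F.Der Γ (F.or a b)) (hac : F.Der (a :: Γ) c)
    (hbc : F.Der (b :: Γ) c) : F.Der Γ c := by
  refine hF.der_byContra (.mp (.hyp (.head _)) ?_)
  have hna : F.Der (F.neg c :: Γ) (F.neg a) :=
    hF.ded (.mp (.hyp (.tail _ (.head _))) hac.weaken_tail)
  exact .mp (hF.ded hbc).weaken (.mp h.weaken hna)

theorem der_iff_mp (h : F.Prov (F.iff a b)) (ha : F.Der Γ a) : F.Der Γ b :=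
  .mp (hF.der_and_left (.prov h)) ha

theorem der_iff_mpr (h : F.Prov (F.iff a b)) (hb : F.Der Γ b) : F.Der Γ a :=
  .mp (hF.der_and_right (.prov h)) hb

/-- `exL_elim` only applies to closed derivations, so the other hypotheses are moved into the
conclusion one at a time. -/
theorem der_exL_hyp {G : List (Ordinal × F.S) → F.S} (h : ∀ ρ, F.Der (G ρ :: Γ) c) :
    F.Der (F.exL G :: Γ) c := by
  induction Γ generalizing c with
  | nil =>
    exact .mp (.prov (hF.exL_elim G c fun ρ => hF.prov_of_der (hF.ded (h ρ)))) (.hyp (.head _))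
  | cons g Γ ih =>
    have hg : F.Der (F.exL G :: Γ) (F.imp g c) := ih fun ρ =>
      hF.ded ((h ρ).mono (List.Perm.swap _ _ _).subset)
    exact .mp hg.weaken_tail (.hyp (.tail _ (.head _)))

theorem der_exL_elim {G : List (Ordinal × F.S) → F.S} (h : F.Der Γ (F.exL G))
    (hc : ∀ ρ, F.Der (G ρ :: Γ) c) : F.Der Γ c :=
  .mp (hF.ded (hF.der_exL_hyp hc)) h

theorem der_box_mp (hab : F.Der Γ (F.box (F.imp a b))) (ha : F.Der Γ (F.box a)) :
    F.Der Γ (F.box b) :=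
  .mp (.mp (.prov (hF.dist a b)) hab) ha

theorem der_box_mp₂ (h : F.Prov (F.imp a (F.imp b c))) (ha : F.Der Γ (F.box a))
    (hb : F.Der Γ (F.box b)) : F.Der Γ (F.box c) :=
  hF.der_box_mp (hF.der_box_mp (.prov (hF.nec h)) ha) hb

end Basic

/-- `listLt` and `listDia` are instances of this, definitionally. -/
def bigAnd {ι : Type*} (f : ι → F.S) (l : List ι) : F.S :=
  l.foldr (fun i acc => F.and (f i) acc) F.top

theorem Basic.der_bigAnd_append (hF : F.Basic) {ι : Type*} {Γ : List F.S} (f : ι → F.S)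
    (l₁ l₂ : List ι) :
    F.Der Γ (F.bigAnd f (l₁ ++ l₂)) ↔ F.Der Γ (F.bigAnd f l₁) ∧ F.Der Γ (F.bigAnd f l₂) := by
  induction l₁ with
  | nil => exact ⟨fun h => ⟨hF.der_top, h⟩, And.right⟩
  | cons i l ih =>
    simp only [bigAnd, List.cons_append, List.foldr_cons] at ih ⊢
    rw [hF.der_and_iff, hF.der_and_iff, ih, and_assoc]

/-- The oracle disjunct `τ ≺ α ∧ ⟨τ⟩σ ∧ □(⟨τ⟩σ → χ)` of the recursion for `[α]χ`, for the
sequence `ρ` of pairs `(τᵢ, σᵢ)`. -/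
def oracleCase (M : Ordinal.{0} → F.S → F.S) (α : Ordinal.{0}) (χ : F.S)
    (ρ : List (Ordinal.{0} × F.S)) : F.S :=
  F.and (F.listLt ρ α) (F.and (F.listDia M ρ) (F.box (F.imp (F.listDia M ρ) χ)))

namespace Basic

variable (hF : F.Basic) {Γ : List F.S} {M : Ordinal → F.S → F.S} {α : Ordinal} {φ ψ χ : F.S}
include hF

theorem der_oracleCase_nil (h : F.Der Γ (F.box χ)) : F.Der Γ (F.oracleCase M α χ []) :=
  hF.der_and_intro hF.der_top <| hF.der_and_intro hF.der_top <|
    hF.der_box_mp (.prov (hF.nec (hF.ax1 χ F.top))) h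

theorem der_oracleCase_append {ρ₁ ρ₂ : List (Ordinal × F.S)}
    (h₁ : F.Der Γ (F.oracleCase M α (F.imp φ ψ) ρ₁)) (h₂ : F.Der Γ (F.oracleCase M α φ ρ₂)) :
    F.Der Γ (F.oracleCase M α ψ (ρ₁ ++ ρ₂)) := by
  obtain ⟨lt₁, dia₁, box₁⟩ := And.imp_right hF.der_and_iff.1 (hF.der_and_iff.1 h₁)
  obtain ⟨lt₂, dia₂, box₂⟩ := And.imp_right hF.der_and_iff.1 (hF.der_and_iff.1 h₂)
  have hlt : F.Der Γ (F.listLt (ρ₁ ++ ρ₂) α) :=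
    (hF.der_bigAnd_append (fun p => F.ltS p.1 α) ρ₁ ρ₂).2 ⟨lt₁, lt₂⟩
  have hdia : F.Der Γ (F.listDia M (ρ₁ ++ ρ₂)) :=
    (hF.der_bigAnd_append (fun p => F.mdia M p.1 p.2) ρ₁ ρ₂).2 ⟨dia₁, dia₂⟩
  have hcut : F.Prov (F.imp (F.imp (F.listDia M ρ₁) (F.imp φ ψ))
      (F.imp (F.imp (F.listDia M ρ₂) φ) (F.imp (F.listDia M (ρ₁ ++ ρ₂)) ψ))) := by
    refine hF.prov_of_der (hF.ded (hF.ded (hF.ded ?_)))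
    obtain ⟨d₁, d₂⟩ := (hF.der_bigAnd_append (fun p => F.mdia M p.1 p.2) ρ₁ ρ₂).1
      (.hyp (.head _))
    exact .mp (.mp (.hyp (.tail _ (.tail _ (.head _)))) d₁) (.mp (.hyp (.tail _ (.head _))) d₂)
  exact hF.der_and_intro hlt (hF.der_and_intro hdia (hF.der_box_mp₂ hcut box₁ box₂))

end Basic

namespace MultiMunch

variable {Λ : Ordinal} {M : Ordinal → F.S → F.S} (hM : F.MultiMunch Λ M) (hF : F.Basic)
  {Γ : List F.S} {α : Ordinal} {χ c : F.S}
include hM hF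

theorem der_of_der_oracleCase (hα : α < Λ) {ρ : List (Ordinal × F.S)}
    (h : F.Der Γ (F.oracleCase M α χ ρ)) : F.Der Γ (M α χ) :=
  hF.der_iff_mpr (hM.recEq α hα χ) <| hF.der_or_inr <| .mp (.prov (hF.exL_intro _ ρ)) h

theorem der_oracleCase_elim (hα : α < Λ) (h : F.Der Γ (M α χ))
    (hc : ∀ ρ, F.Der (F.oracleCase M α χ ρ :: Γ) c) : F.Der Γ c :=
  hF.der_or_elim (hF.der_iff_mp (hM.recEq α hα χ) h)
    (.mp (hF.ded (hc [])).weaken (hF.der_oracleCase_nil (.hyp (.head _))))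
    (hF.der_exL_elim (.hyp (.head _)) fun ρ => (hc ρ).weaken_tail)

end MultiMunch

end MFrame

/-- distribution for multiple-oracle Münchhausen provability,
without induction: `T ⊢ [α]_T(φ→ψ) → ([α]_T φ → [α]_T ψ)` for `α ≺ Λ`. -/
theorem multiMunch_distribution (F : MFrame) (hF : F.Basic)
    (Λ : Ordinal) (M : Ordinal → F.S → F.S) (hM : F.MultiMunch Λ M) :
    ∀ α < Λ, ∀ φ ψ : F.S,
      F.Prov (F.imp (M α (F.imp φ ψ)) (F.imp (M α φ) (M α ψ))) := by
  intro α hα φ ψ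
  refine hF.prov_of_der (hF.ded (hF.ded ?_))
  refine hM.der_oracleCase_elim hF hα (.hyp (.tail _ (.head _))) fun ρ₁ => ?_
  refine hM.der_oracleCase_elim hF hα (.hyp (.tail _ (.head _))) fun ρ₂ => ?_
  exact hM.der_of_der_oracleCase hF hα <|
    hF.der_oracleCase_append (.hyp (.tail _ (.head _))) (.hyp (.head _))
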